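/- Let α ≥ π/2 and let x ∈ 𝒳 be a slowly oscillating periodic solution of Wright's equation x'(t) = -α(e^{x(t-1)} - 1) with q̄(x) ≥ 3. Define a_1(α) = -(α - 1) and recursively a_{i+1}(α) = α(e^{a_i(α)} - 1). Then x(t) < -t · a_i(α) for all t ∈ [-1,0) and all i ≥ 1. -/

import Mathlib

/-!
By periodicity `x < 0` on `(-q̄, 0)`, so the equation makes `x` nondecreasing on `[-2, -1]`, and
`x (s - 1) ≤ c := x (-1) < 0` for `s ∈ [-1, 0]`. Hence `x' ≥ -α (e^c - 1)` on `[-1, 0]`, and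
integrating from `-1` to `0` gives `c ≤ α (e^c - 1)`. This inequality pushes `c` below `a₁ = 1 - α`
and, since `y ↦ α (e^y - 1)` is increasing, below every `aᵢ`. As the `aᵢ` decrease,
`x' ≥ -α (e^c - 1) > -aᵢ` on `(-1, 0)`, so `x t + aᵢ t` increases strictly up to its value `0`
at `t = 0`.
-/

open Real Set Filter

noncomputable section

/-- `x` solves Wright's equation `x'(t) = -α (e^{x(t-1)} - 1)` on all of `ℝ`. -/
def WrightSol (α : ℝ) (x : ℝ → ℝ) : Prop :=
  ∀ t : ℝ, HasDerivAt x (-α * (Real.exp (x (t - 1)) - 1)) t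

/-- The space 𝒳: C¹ functions with `x 0 = 0`, `x' 0 > 0` and `x < 0` on `(-1,0)`. -/
def InX (x : ℝ → ℝ) : Prop :=
  ContDiff ℝ 1 x ∧ x 0 = 0 ∧ 0 < deriv x 0 ∧ ∀ t ∈ Set.Ioo (-1 : ℝ) 0, x t < 0

/-- A slowly oscillating periodic solution in 𝒳, with first zero `q` and data `qbar`:
positive on `(0,q)`, negative on `(q, q+qbar)`, periodic with minimal period `q+qbar`. -/
def SOPSX (α q qbar : ℝ) (x : ℝ → ℝ) : Prop :=
  InX x ∧ WrightSol α x ∧ 1 < q ∧ 1 < qbar ∧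
  (∀ t ∈ Set.Ioo 0 q, 0 < x t) ∧
  (∀ t ∈ Set.Ioo q (q + qbar), x t < 0) ∧
  Function.Periodic x (q + qbar) ∧
  (∀ T : ℝ, 0 < T → Function.Periodic x T → q + qbar ≤ T)

/-- A slowly oscillating periodic solution (up to time translation). -/
def SOPS (α : ℝ) (x : ℝ → ℝ) : Prop :=
  WrightSol α x ∧
  ∃ q qbar : ℝ, 1 < q ∧ 1 < qbar ∧
    (∃ τ : ℝ, (∀ t ∈ Set.Ioo 0 q, 0 < x (t + τ)) ∧
      (∀ t ∈ Set.Ioo q (q + qbar), x (t + τ) < 0)) ∧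
    Function.Periodic x (q + qbar) ∧
    (∀ T : ℝ, 0 < T → Function.Periodic x T → q + qbar ≤ T)

/-- Jones' iterative lower-bound constants: `aJones α i` corresponds to `a_{i+1}` in the
paper, so `aJones α 0 = a_1 = -(α - 1)` and `aJones α (i+1) = α (e^{aJones α i} - 1)`. -/
noncomputable def aJones (α : ℝ) : ℕ → ℝ
  | 0 => -(α - 1)
  | (i + 1) => α * (Real.exp (aJones α i) - 1)

theorem lt_one_sub_of_le_mul_exp_sub_one {α c : ℝ} (hα : 0 < α) (hc : c < 0)
    (h : c ≤ α * (exp c - 1)) : c < 1 - α := by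
  -- `e^{-c} > 1 - c` turns `c + α ≤ α e^c` into `(c + α) (1 - c) < α`.
  have hexp : exp c * (1 - c) < 1 := by
    have h1 : -c + 1 < exp (-c) := add_one_lt_exp (by linarith)
    have h2 : exp c * exp (-c) = 1 := by rw [← exp_add, add_neg_cancel, exp_zero]
    nlinarith [exp_pos c]
  have hprod : (c + α) * (1 - c) < α := by
    nlinarith [mul_le_mul_of_nonneg_right (by linarith : c + α ≤ α * exp c)
      (by linarith : (0 : ℝ) ≤ 1 - c)]
  nlinarith

theorem aJones_succ (α : ℝ) (i : ℕ) : aJones α (i + 1) = α * (exp (aJones α i) - 1) := rfl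

theorem aJones_strictAnti {α : ℝ} (hα : 0 < α) (hα1 : α ≠ 1) : StrictAnti (aJones α) := by
  refine strictAnti_nat_of_succ_lt fun i => ?_
  induction i with
  | zero =>
    show α * (exp (-(α - 1)) - 1) < -(α - 1)
    have h1 : α - 1 + 1 < exp (α - 1) := add_one_lt_exp (sub_ne_zero.mpr hα1)
    have h2 : exp (α - 1) * exp (-(α - 1)) = 1 := by rw [← exp_add, add_neg_cancel, exp_zero]
    nlinarith [mul_lt_mul_of_pos_right h1 (exp_pos (-(α - 1)))]
  | succ i ih =>
    show α * (exp (aJones α (i + 1)) - 1) < α * (exp (aJones α i) - 1)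
    gcongr

theorem lt_aJones {α c : ℝ} (hα : 0 < α) (hc : c < 0) (h : c ≤ α * (exp c - 1)) (i : ℕ) :
    c < aJones α i := by
  induction i with
  | zero =>
    show c < -(α - 1)
    linarith [lt_one_sub_of_le_mul_exp_sub_one hα hc h]
  | succ i ih =>
    rw [aJones_succ]
    calc c ≤ α * (exp c - 1) := h
      _ < α * (exp (aJones α i) - 1) := by gcongr

namespace WrightSol

variable {α : ℝ} {x : ℝ → ℝ}

theorem le_deriv (hW : WrightSol α x) (hα : 0 ≤ α) {t c : ℝ} (h : x (t - 1) ≤ c) :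
    -α * (exp c - 1) ≤ deriv x t := by
  rw [(hW t).deriv]
  have := exp_le_exp.mpr h
  nlinarith

theorem continuous (hW : WrightSol α x) : Continuous x :=
  continuous_iff_continuousAt.mpr fun t => (hW t).continuousAt

theorem mul_sub_le_sub (hW : WrightSol α x) (hα : 0 ≤ α) {a b c : ℝ}
    (hc : ∀ s ∈ Ioo a b, x (s - 1) ≤ c) (hab : a ≤ b) :
    -α * (exp c - 1) * (b - a) ≤ x b - x a := by
  refine (convex_Icc a b).mul_sub_le_image_sub_of_le_deriv hW.continuous.continuousOn
    (fun s _ => (hW s).differentiableAt.differentiableWithinAt) (fun s hs => ?_) a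
    (left_mem_Icc.mpr hab) b (right_mem_Icc.mpr hab) hab
  rw [interior_Icc] at hs
  exact hW.le_deriv hα (hc s hs)

theorem mul_sub_lt_sub (hW : WrightSol α x) (hα : 0 ≤ α) {a b c k : ℝ}
    (hc : ∀ s ∈ Ioo a b, x (s - 1) ≤ c) (hk : α * (exp c - 1) < k) (hab : a < b) :
    -k * (b - a) < x b - x a := by
  refine (convex_Icc a b).mul_sub_lt_image_sub_of_lt_deriv hW.continuous.continuousOn
    (fun s _ => (hW s).differentiableAt.differentiableWithinAt) (fun s hs => ?_) a
    (left_mem_Icc.mpr hab.le) b (right_mem_Icc.mpr hab.le) hab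
  rw [interior_Icc] at hs
  linarith [hW.le_deriv hα (hc s hs)]

theorem monotoneOn_of_nonpos (hW : WrightSol α x) (hα : 0 ≤ α) {a b : ℝ}
    (h : ∀ s ∈ Ioo (a - 1) (b - 1), x s ≤ 0) : MonotoneOn x (Icc a b) := by
  intro s hs t ht hst
  have hsub := hW.mul_sub_le_sub hα (c := 0)
    (fun r hr => h (r - 1) ⟨by linarith [hs.1, hr.1], by linarith [ht.2, hr.2]⟩) hst
  simp only [exp_zero, sub_self, mul_zero, zero_mul] at hsub
  linarith

end WrightSol

theorem SOPSX.neg_of_mem_Ioo {α q qbar : ℝ} {x : ℝ → ℝ} (hx : SOPSX α q qbar x) {t : ℝ}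
    (ht : t ∈ Ioo (-qbar) 0) : x t < 0 := by
  obtain ⟨-, -, -, -, -, hneg, hper, -⟩ := hx
  rw [← hper t]
  exact hneg _ ⟨by linarith [ht.1], by linarith [ht.2]⟩

theorem jones_minus_one (α q qbar : ℝ) (x : ℝ → ℝ) (hα : Real.pi / 2 ≤ α)
    (hx : SOPSX α q qbar x) (hqbar : 3 ≤ qbar) :
    ∀ i : ℕ, ∀ t ∈ Set.Ico (-1 : ℝ) 0, x t < -t * aJones α i := by
  have hα1 : 1 < α := by linarith [pi_gt_three]
  have hα0 : 0 < α := by linarith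
  have ⟨⟨_, hx0, _⟩, hW, _⟩ := hx
  set c := x (-1)
  have hc_neg : c < 0 := hx.neg_of_mem_Ioo ⟨by linarith, by norm_num⟩
  have hmono : MonotoneOn x (Icc (-2) (-1)) := hW.monotoneOn_of_nonpos hα0.le fun s hs =>
    (hx.neg_of_mem_Ioo ⟨by linarith [hs.1], by linarith [hs.2]⟩).le
  have hc : ∀ s ∈ Ioo (-1 : ℝ) 0, x (s - 1) ≤ c := fun s hs =>
    hmono ⟨by linarith [hs.1], by linarith [hs.2]⟩ ⟨by norm_num, le_rfl⟩ (by linarith [hs.2])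
  have hc_le : c ≤ α * (exp c - 1) := by
    have := hW.mul_sub_le_sub hα0.le hc (by norm_num : (-1 : ℝ) ≤ 0)
    rw [hx0] at this
    linarith
  intro i t ht
  have hk : α * (exp c - 1) < aJones α i :=
    calc α * (exp c - 1) < α * (exp (aJones α i) - 1) := by
          gcongr; exact lt_aJones hα0 hc_neg hc_le i
      _ = aJones α (i + 1) := (aJones_succ α i).symm
      _ < aJones α i := aJones_strictAnti hα0 hα1.ne' (Nat.lt_succ_self i)
  have := hW.mul_sub_lt_sub hα0.le (fun s hs => hc s ⟨by linarith [ht.1, hs.1], hs.2⟩) hk ht.2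
  rw [hx0] at this
  linarith
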